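/- arXiv:1606.04629 — 2 statements merged into one kernel-verified Lean document; each statement's English description precedes it below -/
import Mathlib

section
/- Let g ∈ L^p_loc(ℝ^d) and define ‖g‖_{S_1^p} = sup_{x∈ℝ^d} ( ⨍_{B(x,1)} |g|^p )^{1/p}. Then for any f ∈ L^p(ℝ^d) with 1 ≤ p < ∞, the function x ↦ g(x/ε) S_ε(f)(x) satisfies ‖g(·/ε) S_ε(f)‖_{L^p(ℝ^d)} ≤ C ‖g‖_{S_1^p} ‖f‖_{L^p(ℝ^d)}, where C depends only on d. -/
open MeasureTheory Metric Filter
open scoped ENNReal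

noncomputable section

lemma jensen_lintegral {α : Type*} [MeasurableSpace α] {μ : Measure α}
    {w φ : α → ℝ≥0∞} (hw : AEMeasurable w μ) (hφ : AEMeasurable φ μ)
    (hw1 : ∫⁻ a, w a ∂μ = 1) {p : ℝ} (hp : 1 ≤ p) :
    (∫⁻ a, w a * φ a ∂μ) ^ p ≤ ∫⁻ a, w a * φ a ^ p ∂μ := by
  rcases eq_or_lt_of_le hp with hp1 | hp1
  · simp [← hp1]
  have hp0 : (0:ℝ) < p := lt_trans one_pos hp1
  have hpq : Real.HolderConjugate (Real.conjExponent p) p :=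
    (Real.HolderConjugate.conjExponent hp1).symm
  set q := Real.conjExponent p with hqdef
  have hq0 : (0:ℝ) < q := hpq.pos
  have hwq : AEMeasurable (fun a => w a ^ (1/q)) μ :=
    ENNReal.continuous_rpow_const.measurable.comp_aemeasurable hw
  have hwp : AEMeasurable (fun a => w a ^ (1/p) * φ a) μ :=
    (ENNReal.continuous_rpow_const.measurable.comp_aemeasurable hw).mul hφ
  have hH := ENNReal.lintegral_mul_le_Lp_mul_Lq μ hpq hwq hwp
  simp only [Pi.mul_apply] at hH
  have e1 : ∫⁻ a, (fun a => w a ^ (1/q)) a * (fun a => w a ^ (1/p) * φ a) a ∂μ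
      = ∫⁻ a, w a * φ a ∂μ := by
    refine lintegral_congr fun a => ?_
    rw [← mul_assoc, ← ENNReal.rpow_add_of_nonneg _ _ (by positivity) (by positivity),
      one_div, one_div, hpq.inv_add_inv_eq_one, ENNReal.rpow_one]
  have e2 : ∫⁻ a, ((fun a => w a ^ (1/q)) a) ^ q ∂μ = 1 := by
    rw [← hw1]
    refine lintegral_congr fun a => ?_
    rw [← ENNReal.rpow_mul, one_div, inv_mul_cancel₀ hq0.ne', ENNReal.rpow_one]
  have e3 : ∫⁻ a, ((fun a => w a ^ (1/p) * φ a) a) ^ p ∂μ = ∫⁻ a, w a * φ a ^ p ∂μ := by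
    refine lintegral_congr fun a => ?_
    rw [ENNReal.mul_rpow_of_nonneg _ _ hp0.le, ← ENNReal.rpow_mul, one_div,
      inv_mul_cancel₀ hp0.ne', ENNReal.rpow_one]
  rw [e1, e2, e3] at hH
  simp only [ENNReal.one_rpow, one_mul] at hH
  calc (∫⁻ a, w a * φ a ∂μ) ^ p
      ≤ ((∫⁻ a, w a * φ a ^ p ∂μ) ^ (1/p)) ^ p := ENNReal.rpow_le_rpow hH hp0.le
    _ = ∫⁻ a, w a * φ a ^ p ∂μ := by
        rw [← ENNReal.rpow_mul, one_div, inv_mul_cancel₀ hp0.ne', ENNReal.rpow_one]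

set_option maxHeartbeats 2000000 in
/-- If `‖g‖_{S_1^p} = sup_x (⨍_{B(x,1)} |g|^p)^{1/p} ≤ K`, then
`‖g(·/ε) S_ε(f)‖_{L^p(ℝ^d)} ≤ C ‖g‖_{S_1^p} ‖f‖_{L^p(ℝ^d)}`, with `C` depending
only on `d` (the mollifier `ζ` being fixed). -/
theorem weighted_mollification_bound
    (d : ℕ) (hd : 1 ≤ d)
    (ζ : EuclideanSpace ℝ (Fin d) → ℝ)
    (hζ_smooth : ContDiff ℝ (⊤ : ℕ∞) ζ)
    (hζ_supp : tsupport ζ ⊆ ball (0 : EuclideanSpace ℝ (Fin d)) 1)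
    (hζ_nonneg : ∀ x, 0 ≤ ζ x)
    (hζ_int : ∫ x, ζ x = 1) :
    ∃ C > 0, ∀ (p : ℝ), 1 ≤ p →
      ∀ (ε : ℝ), 0 < ε →
      ∀ (g : EuclideanSpace ℝ (Fin d) → ℝ), Measurable g →
      ∀ (K : ℝ), 0 ≤ K →
        (∀ x : EuclideanSpace ℝ (Fin d), IntegrableOn (fun y => |g y| ^ p) (ball x 1)) →
        (∀ x : EuclideanSpace ℝ (Fin d), (⨍ y in ball x 1, |g y| ^ p) ≤ K ^ p) →
        ∀ f : EuclideanSpace ℝ (Fin d) → ℝ, MemLp f (ENNReal.ofReal p) volume →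
          eLpNorm (fun x => g (ε⁻¹ • x) * ∫ y, (ε ^ d)⁻¹ * ζ (ε⁻¹ • y) * f (x - y))
              (ENNReal.ofReal p) volume
            ≤ ENNReal.ofReal (C * K) * eLpNorm f (ENNReal.ofReal p) volume := by
  have hζ_cont : Continuous ζ := hζ_smooth.continuous
  have hζ_cs : HasCompactSupport ζ :=
    IsCompact.of_isClosed_subset (isCompact_closedBall 0 1) (isClosed_tsupport ζ)
      (hζ_supp.trans ball_subset_closedBall)
  obtain ⟨u₀, hu₀⟩ := hζ_cont.exists_forall_ge_of_hasCompactSupport hζ_cs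
  set M : ℝ := ζ u₀ with hMdef
  have hM0 : 0 ≤ M := hζ_nonneg u₀
  set vB : ℝ := (volume (ball (0 : EuclideanSpace ℝ (Fin d)) 1)).toReal with hvB
  have hvB0 : 0 ≤ vB := ENNReal.toReal_nonneg
  refine ⟨M * vB + 1, by positivity, ?_⟩
  intro p hp ε hε g hg K hK hgint hgavg f hf
  set C : ℝ := M * vB + 1 with hCdef
  have hC1 : (1:ℝ) ≤ C := by nlinarith
  have hp0 : (0:ℝ) < p := lt_of_lt_of_le one_pos hp
  have hq0 : ENNReal.ofReal p ≠ 0 := by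
    simp [ENNReal.ofReal_eq_zero, not_le, hp0]
  have hqt : ENNReal.ofReal p ≠ ⊤ := ENNReal.ofReal_ne_top
  have hqp : (ENNReal.ofReal p).toReal = p := ENNReal.toReal_ofReal hp0.le
  -- replace f by a measurable representative
  set f' : EuclideanSpace ℝ (Fin d) → ℝ := hf.1.mk f with hf'def
  have hf'm : Measurable f' := hf.1.stronglyMeasurable_mk.measurable
  have hff' : f =ᵐ[volume] f' := hf.1.ae_eq_mk
  have hTeq : ∀ x, (∫ y, (ε ^ d)⁻¹ * ζ (ε⁻¹ • y) * f (x - y))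
      = ∫ y, (ε ^ d)⁻¹ * ζ (ε⁻¹ • y) * f' (x - y) := by
    intro x
    refine integral_congr_ae ?_
    have hmp : MeasurePreserving (fun y : EuclideanSpace ℝ (Fin d) => x - y) volume volume :=
      Measure.measurePreserving_sub_left volume x
    have : (fun y => f (x - y)) =ᵐ[volume] fun y => f' (x - y) :=
      hff'.comp_tendsto hmp.quasiMeasurePreserving.tendsto_ae
    filter_upwards [this] with y hy
    rw [hy]
  -- substitution: the mollification as an integral against ζ
  have hsub : ∀ x, (∫ y, (ε ^ d)⁻¹ * ζ (ε⁻¹ • y) * f' (x - y))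
      = ∫ u, ζ u * f' (x - ε • u) := by
    intro x
    have h1 := Measure.integral_comp_smul (μ := volume)
      (fun y : EuclideanSpace ℝ (Fin d) => (ε ^ d)⁻¹ * ζ (ε⁻¹ • y) * f' (x - y)) ε
    have hrk : Module.finrank ℝ (EuclideanSpace ℝ (Fin d)) = d := by
      simp [finrank_euclideanSpace]
    rw [hrk] at h1
    have hεd : (0:ℝ) < ε ^ d := pow_pos hε d
    have h2 : ∀ u : EuclideanSpace ℝ (Fin d), ε⁻¹ • (ε • u) = u := by
      intro u; rw [smul_smul, inv_mul_cancel₀ hε.ne', one_smul]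
    simp only [h2] at h1
    rw [abs_of_nonneg (inv_nonneg.2 hεd.le), smul_eq_mul] at h1
    have h3 : ∫ u, (ε ^ d)⁻¹ * ζ u * f' (x - ε • u)
        = (ε ^ d)⁻¹ * ∫ u, ζ u * f' (x - ε • u) := by
      rw [← integral_const_mul]
      congr 1; ext u; ring
    rw [h3] at h1
    have := mul_left_cancel₀ (inv_ne_zero hεd.ne') h1.symm
    rw [← this]
  -- rewrite goal in terms of f'
  rw [eLpNorm_congr_ae hff']
  have hfun : (fun x => g (ε⁻¹ • x) * ∫ y, (ε ^ d)⁻¹ * ζ (ε⁻¹ • y) * f (x - y))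
      = fun x => g (ε⁻¹ • x) * ∫ u, ζ u * f' (x - ε • u) := by
    funext x; rw [hTeq x, hsub x]
  rw [hfun]
  -- notation
  set G : EuclideanSpace ℝ (Fin d) → ℝ≥0∞ := fun x => (‖g (ε⁻¹ • x)‖₊ : ℝ≥0∞) ^ p with hGdef
  set F : EuclideanSpace ℝ (Fin d) → ℝ≥0∞ := fun z => (‖f' z‖₊ : ℝ≥0∞) ^ p with hFdef
  set w : EuclideanSpace ℝ (Fin d) → ℝ≥0∞ := fun u => ENNReal.ofReal (ζ u) with hwdef
  have hGm : Measurable G := ENNReal.continuous_rpow_const.measurable.comp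
    ((hg.comp (measurable_const_smul ε⁻¹)).nnnorm.coe_nnreal_ennreal)
  have hFm : Measurable F := ENNReal.continuous_rpow_const.measurable.comp
    (hf'm.nnnorm.coe_nnreal_ennreal)
  have hwm : Measurable w := hζ_cont.measurable.ennreal_ofReal
  have hζ_intg : Integrable ζ := hζ_cont.integrable_of_hasCompactSupport hζ_cs
  have hw1 : (∫⁻ u, w u) = 1 := by
    rw [hwdef, ← ofReal_integral_eq_lintegral_ofReal hζ_intg (Eventually.of_forall hζ_nonneg),
      hζ_int, ENNReal.ofReal_one]
  have hsubmeas : ∀ x : EuclideanSpace ℝ (Fin d),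
      Measurable (fun u : EuclideanSpace ℝ (Fin d) => x - ε • u) := fun x =>
    measurable_const.sub (measurable_id.const_smul ε)
  have hsubmeas' : ∀ u : EuclideanSpace ℝ (Fin d),
      Measurable (fun x : EuclideanSpace ℝ (Fin d) => x - ε • u) := fun u =>
    measurable_id.sub measurable_const
  have hmeasGF : ∀ u : EuclideanSpace ℝ (Fin d),
      Measurable fun x => G x * F (x - ε • u) := fun u =>
    hGm.mul (hFm.comp (hsubmeas' u))
  have hmeaswF : ∀ x : EuclideanSpace ℝ (Fin d),
      Measurable fun u => w u * F (x - ε • u) := fun x =>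
    hwm.mul (hFm.comp (hsubmeas x))
  have hmeasGFz : ∀ u : EuclideanSpace ℝ (Fin d),
      Measurable fun z => G (z + ε • u) * F z := fun u =>
    (hGm.comp (measurable_id.add measurable_const)).mul hFm
  have hmeaswG : ∀ z : EuclideanSpace ℝ (Fin d),
      Measurable fun u => w u * G (z + ε • u) := fun z =>
    hwm.mul (hGm.comp (measurable_const.add (measurable_id.const_smul ε)))
  have hmeasGt : ∀ z : EuclideanSpace ℝ (Fin d),
      Measurable fun u => G (z + ε • u) := fun z =>
    hGm.comp (measurable_const.add (measurable_id.const_smul ε))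
  -- pointwise Jensen
  have hpt : ∀ x, (‖∫ u, ζ u * f' (x - ε • u)‖₊ : ℝ≥0∞) ^ p
      ≤ ∫⁻ u, w u * F (x - ε • u) := by
    intro x
    have h1 : (‖∫ u, ζ u * f' (x - ε • u)‖₊ : ℝ≥0∞)
        ≤ ∫⁻ u, w u * (‖f' (x - ε • u)‖₊ : ℝ≥0∞) := by
      refine (enorm_integral_le_lintegral_enorm _).trans_eq (lintegral_congr fun u => ?_)
      rw [enorm_mul, Real.enorm_eq_ofReal (hζ_nonneg u)]
      rfl
    have h2 := jensen_lintegral (μ := volume) hwm.aemeasurable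
      ((hf'm.comp (hsubmeas x)).nnnorm.coe_nnreal_ennreal).aemeasurable hw1 hp
    calc ((‖∫ u, ζ u * f' (x - ε • u)‖₊ : ℝ≥0∞)) ^ p
        ≤ (∫⁻ u, w u * (‖f' (x - ε • u)‖₊ : ℝ≥0∞)) ^ p := ENNReal.rpow_le_rpow h1 hp0.le
      _ ≤ ∫⁻ u, w u * ((‖f' (x - ε • u)‖₊ : ℝ≥0∞)) ^ p := h2
      _ = ∫⁻ u, w u * F (x - ε • u) := rfl
  -- the key bound on the sliding averages of g
  have step5 : ∀ z : EuclideanSpace ℝ (Fin d),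
      (∫⁻ u, w u * G (z + ε • u)) ≤ ENNReal.ofReal (M * (vB * K ^ p)) := by
    intro z
    set c : EuclideanSpace ℝ (Fin d) := ε⁻¹ • z with hc
    have hGz : ∀ u, G (z + ε • u) = ENNReal.ofReal (|g (c + u)| ^ p) := by
      intro u
      have h1 : ε⁻¹ • (z + ε • u) = c + u := by
        rw [smul_add, smul_smul, inv_mul_cancel₀ hε.ne', one_smul]
      show (‖g (ε⁻¹ • (z + ε • u))‖₊ : ℝ≥0∞) ^ p = _
      rw [h1, ← enorm_eq_nnnorm, Real.enorm_eq_ofReal_abs, ENNReal.ofReal_rpow_of_nonneg (abs_nonneg _) hp0.le]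
    have hΦm : Measurable (fun v => ENNReal.ofReal (|g v| ^ p)) :=
      ((Real.continuous_rpow_const hp0.le).measurable.comp hg.abs).ennreal_ofReal
    calc ∫⁻ u, w u * G (z + ε • u)
        ≤ ∫⁻ u, (ball (0 : EuclideanSpace ℝ (Fin d)) 1).indicator
            (fun u => ENNReal.ofReal M * G (z + ε • u)) u := by
          refine lintegral_mono fun u => ?_
          by_cases hu : u ∈ ball (0 : EuclideanSpace ℝ (Fin d)) 1
          · rw [Set.indicator_of_mem hu]
            exact mul_le_mul_left (ENNReal.ofReal_le_ofReal (hu₀ u)) _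
          · have hz0 : ζ u = 0 := image_eq_zero_of_notMem_tsupport (fun h => hu (hζ_supp h))
            simp [Set.indicator_of_notMem hu, hwdef, hz0]
      _ = ∫⁻ u in ball (0 : EuclideanSpace ℝ (Fin d)) 1, ENNReal.ofReal M * G (z + ε • u) :=
          lintegral_indicator measurableSet_ball _
      _ = ENNReal.ofReal M * ∫⁻ u in ball (0 : EuclideanSpace ℝ (Fin d)) 1, G (z + ε • u) :=
          lintegral_const_mul _ (hGm.comp (measurable_const.add (measurable_id.const_smul ε)) :
            Measurable fun u : EuclideanSpace ℝ (Fin d) => G (z + ε • u))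
      _ = ENNReal.ofReal M * ∫⁻ v in ball c 1, ENNReal.ofReal (|g v| ^ p) := by
          congr 1
          have hmp : MeasurePreserving (fun u : EuclideanSpace ℝ (Fin d) => c + u) volume volume :=
            measurePreserving_add_left volume c
          have hpre : (fun u : EuclideanSpace ℝ (Fin d) => c + u) ⁻¹' (ball c 1)
              = ball (0 : EuclideanSpace ℝ (Fin d)) 1 := by
            ext u
            simp [mem_ball, dist_eq_norm]
          have h := hmp.setLIntegral_comp_preimage (s := ball c 1) measurableSet_ball hΦm
          rw [hpre] at h
          rw [← h]
          exact lintegral_congr fun u => hGz u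
      _ ≤ ENNReal.ofReal M * ENNReal.ofReal (vB * K ^ p) := by
          refine mul_le_mul_right ?_ _
          have hInt : (∫⁻ v in ball c 1, ENNReal.ofReal (|g v| ^ p))
              = ENNReal.ofReal (∫ v in ball c 1, |g v| ^ p) :=
            (ofReal_integral_eq_lintegral_ofReal (hgint c)
              (Eventually.of_forall fun v => by positivity)).symm
          rw [hInt]
          refine ENNReal.ofReal_le_ofReal ?_
          have havg := hgavg c
          rw [setAverage_eq, smul_eq_mul] at havg
          have hballc : volume (ball c 1) = volume (ball (0 : EuclideanSpace ℝ (Fin d)) 1) :=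
            Measure.addHaar_ball_center volume c 1
          have hpos : 0 < (volume (ball c 1)).toReal :=
            ENNReal.toReal_pos (measure_ball_pos volume c one_pos).ne' measure_ball_lt_top.ne
          have h2 : (∫ v in ball c 1, |g v| ^ p) ≤ (volume (ball c 1)).toReal * K ^ p := by
            calc (∫ v in ball c 1, |g v| ^ p)
                = (volume (ball c 1)).toReal
                    * ((volume (ball c 1)).toReal⁻¹ * ∫ v in ball c 1, |g v| ^ p) := by
                  field_simp
              _ ≤ (volume (ball c 1)).toReal * K ^ p :=
                  mul_le_mul_of_nonneg_left havg hpos.le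
          rw [hballc] at h2
          exact h2
      _ = ENNReal.ofReal (M * (vB * K ^ p)) := (ENNReal.ofReal_mul hM0).symm
  -- main chain of (in)equalities
  have main : (∫⁻ x, (‖g (ε⁻¹ • x) * ∫ u, ζ u * f' (x - ε • u)‖₊ : ℝ≥0∞) ^ p)
      ≤ ENNReal.ofReal (M * (vB * K ^ p)) * ∫⁻ z, F z := by
    have hprodm : Measurable (fun y : (EuclideanSpace ℝ (Fin d)) × (EuclideanSpace ℝ (Fin d)) =>
        G y.1 * (w y.2 * F (y.1 - ε • y.2))) :=
      (hGm.comp measurable_fst).mul ((hwm.comp measurable_snd).mul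
        (hFm.comp (measurable_fst.sub (measurable_snd.const_smul ε))))
    have hprodm2 : Measurable (fun y : (EuclideanSpace ℝ (Fin d)) × (EuclideanSpace ℝ (Fin d)) =>
        w y.1 * (G (y.2 + ε • y.1) * F y.2)) :=
      (hwm.comp measurable_fst).mul ((hGm.comp (measurable_snd.add
        (measurable_fst.const_smul ε))).mul (hFm.comp measurable_snd))
    calc (∫⁻ x, (‖g (ε⁻¹ • x) * ∫ u, ζ u * f' (x - ε • u)‖₊ : ℝ≥0∞) ^ p)
        = ∫⁻ x, G x * (‖∫ u, ζ u * f' (x - ε • u)‖₊ : ℝ≥0∞) ^ p := by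
          refine lintegral_congr fun x => ?_
          rw [nnnorm_mul, ENNReal.coe_mul, ENNReal.mul_rpow_of_nonneg _ _ hp0.le]
      _ ≤ ∫⁻ x, ∫⁻ u, G x * (w u * F (x - ε • u)) := by
          refine lintegral_mono fun x => ?_
          calc G x * (‖∫ u, ζ u * f' (x - ε • u)‖₊ : ℝ≥0∞) ^ p
              ≤ G x * ∫⁻ u, w u * F (x - ε • u) := mul_le_mul_right (hpt x) _
            _ = ∫⁻ u, G x * (w u * F (x - ε • u)) :=
                (lintegral_const_mul (G x) (hmeaswF x)).symm
      _ = ∫⁻ u, ∫⁻ x, G x * (w u * F (x - ε • u)) :=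
          lintegral_lintegral_swap hprodm.aemeasurable
      _ = ∫⁻ u, w u * ∫⁻ z, G (z + ε • u) * F z := by
          refine lintegral_congr fun u => ?_
          have e1 : (∫⁻ x, G x * (w u * F (x - ε • u)))
              = w u * ∫⁻ x, G x * F (x - ε • u) := by
            rw [← lintegral_const_mul (w u) (hmeasGF u)]
            exact lintegral_congr fun x => by ring
          rw [e1]
          congr 1
          have hmp : MeasurePreserving
              (fun z : EuclideanSpace ℝ (Fin d) => z + ε • u) volume volume :=
            measurePreserving_add_right volume (ε • u)
          have h := hmp.lintegral_comp (f := fun x => G x * F (x - ε • u)) (hmeasGF u)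
          rw [← h]
          refine lintegral_congr fun z => ?_
          simp only [add_sub_cancel_right]
      _ = ∫⁻ z, F z * ∫⁻ u, w u * G (z + ε • u) := by
          have e2 : ∀ u, w u * (∫⁻ z, G (z + ε • u) * F z)
              = ∫⁻ z, w u * (G (z + ε • u) * F z) := fun u =>
            (lintegral_const_mul (w u) (hmeasGFz u)).symm
          rw [lintegral_congr e2, lintegral_lintegral_swap hprodm2.aemeasurable]
          refine lintegral_congr fun z => ?_
          rw [← lintegral_const_mul (F z) (hmeaswG z)]
          exact lintegral_congr fun u => by ring
      _ ≤ ∫⁻ z, F z * ENNReal.ofReal (M * (vB * K ^ p)) :=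
          lintegral_mono fun z => mul_le_mul_right (step5 z) _
      _ = ENNReal.ofReal (M * (vB * K ^ p)) * ∫⁻ z, F z := by
          rw [lintegral_mul_const _ hFm, mul_comm]
  -- conclude
  have hJ : eLpNorm f' (ENNReal.ofReal p) volume = (∫⁻ z, F z) ^ (1/p) := by
    rw [eLpNorm_eq_lintegral_rpow_enorm_toReal hq0 hqt, hqp]
    rfl
  rw [eLpNorm_eq_lintegral_rpow_enorm_toReal hq0 hqt, hqp, hJ]
  have hmono : (∫⁻ x, (‖g (ε⁻¹ • x) * ∫ u, ζ u * f' (x - ε • u)‖₊ : ℝ≥0∞) ^ p) ^ (1/p)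
      ≤ (ENNReal.ofReal (M * (vB * K ^ p)) * ∫⁻ z, F z) ^ (1/p) :=
    ENNReal.rpow_le_rpow main (by positivity)
  have hKp : ENNReal.ofReal (K ^ p) ^ ((1:ℝ)/p) = ENNReal.ofReal K := by
    rw [← ENNReal.ofReal_rpow_of_nonneg hK hp0.le, ← ENNReal.rpow_mul,
      mul_one_div_cancel hp0.ne', ENNReal.rpow_one]
  have hCb : ENNReal.ofReal (M * vB) ^ ((1:ℝ)/p) ≤ ENNReal.ofReal C := by
    rcases le_or_gt (ENNReal.ofReal (M * vB)) 1 with h | h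
    · refine (ENNReal.rpow_le_one h (by positivity)).trans ?_
      rw [← ENNReal.ofReal_one]
      exact ENNReal.ofReal_le_ofReal hC1
    · calc ENNReal.ofReal (M * vB) ^ ((1:ℝ)/p)
          ≤ ENNReal.ofReal (M * vB) ^ (1:ℝ) :=
            ENNReal.rpow_le_rpow_of_exponent_le h.le ((div_le_one hp0).2 hp)
        _ = ENNReal.ofReal (M * vB) := ENNReal.rpow_one _
        _ ≤ ENNReal.ofReal C := ENNReal.ofReal_le_ofReal (by rw [hCdef]; linarith)
  calc (∫⁻ x, (‖g (ε⁻¹ • x) * ∫ u, ζ u * f' (x - ε • u)‖₊ : ℝ≥0∞) ^ p) ^ (1/p)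
      ≤ (ENNReal.ofReal (M * (vB * K ^ p)) * ∫⁻ z, F z) ^ (1/p) := hmono
    _ = ENNReal.ofReal (M * vB) ^ ((1:ℝ)/p) * ENNReal.ofReal (K ^ p) ^ ((1:ℝ)/p)
          * (∫⁻ z, F z) ^ (1/p) := by
        rw [show M * (vB * K ^ p) = (M * vB) * K ^ p by ring,
          ENNReal.ofReal_mul (by positivity), ENNReal.mul_rpow_of_nonneg _ _ (by positivity),
          ENNReal.mul_rpow_of_nonneg _ _ (by positivity)]
    _ ≤ ENNReal.ofReal C * ENNReal.ofReal K * (∫⁻ z, F z) ^ (1/p) := by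
        rw [hKp]
        exact mul_le_mul_left (mul_le_mul_left hCb _) _
    _ = ENNReal.ofReal (C * K) * (∫⁻ z, F z) ^ (1/p) := by
        rw [ENNReal.ofReal_mul (le_trans zero_le_one hC1)]
end
end

section
/- Let Ω ⊂ ℝ^d be a bounded Lipschitz domain and for r > 0 let Ω_r = {x ∈ Ω : dist(x, ∂Ω) < r}. Then there exist constants c, C > 0 depending only on Ω such that c·r ≤ |Ω_r| ≤ C·r for all 0 < r ≤ diam(Ω), where |·| denotes Lebesgue measure. -/
/-!
In a chart at a boundary point, `Ω = {h > 0}` for the height `h x = ⟪ν, x⟫ - ψ x`, which grows at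
unit speed along `ν`, is `(1 + M)`-Lipschitz and vanishes exactly on `∂Ω`. Hence near that point
`Ω_r` contains the slab `{0 < h ≤ r / 2}` (move along `ν` down to the graph) and is contained in
the slab `{0 < h ≤ (1 + M) r}`. A slab of height `s` has measure comparable to `s`: its
translates by the multiples of `s ν` are pairwise disjoint, about `D / s` of them fit into a
fixed bounded set, and as many cover a fixed slab of height `D`. Compactness of `∂Ω` glues the
local upper bounds, and since `r ↦ |Ω_r|` is monotone and bounded by `|Ω|`, both bounds extend
from small `r` to `0 < r ≤ diam Ω`.
-/

open MeasureTheory Metric Set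

noncomputable section

/-- A bounded Lipschitz domain: an open bounded set whose boundary is locally the
region above the graph of a Lipschitz function (in a suitable orthonormal frame). -/
def IsLipschitzDomain {d : ℕ} (Ω : Set (EuclideanSpace ℝ (Fin d))) : Prop :=
  IsOpen Ω ∧ Bornology.IsBounded Ω ∧
    ∀ z ∈ frontier Ω,
      ∃ (U : Set (EuclideanSpace ℝ (Fin d))) (ν : EuclideanSpace ℝ (Fin d))
        (ψ : EuclideanSpace ℝ (Fin d) → ℝ) (M : NNReal),
        z ∈ U ∧ IsOpen U ∧ ‖ν‖ = 1 ∧ LipschitzWith M ψ ∧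
        (∀ (x : EuclideanSpace ℝ (Fin d)) (t : ℝ), ψ (x + t • ν) = ψ x) ∧
        Ω ∩ U = {x | ψ x < (inner ℝ ν x : ℝ)} ∩ U

open scoped ENNReal NNReal

theorem Monotone.exists_pos_mul_le_of_le_mul {f : ℝ → ℝ} (hf : Monotone f) {c r₁ : ℝ}
    (hc : 0 < c) (hr₁ : 0 < r₁) (h : ∀ r, 0 < r → r ≤ r₁ → c * r ≤ f r) (R : ℝ) :
    ∃ c' > 0, ∀ r, 0 < r → r ≤ R → c' * r ≤ f r := by
  have hm : 0 < max r₁ R := lt_max_of_lt_left hr₁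
  refine ⟨c * (r₁ / max r₁ R), by positivity, fun r hr hrR => ?_⟩
  rcases le_or_gt r r₁ with hrr₁ | hr₁r
  · calc c * (r₁ / max r₁ R) * r ≤ c * 1 * r := by
          gcongr; exact div_le_one_of_le₀ (le_max_left _ _) hm.le
      _ ≤ f r := by simpa using h r hr hrr₁
  · calc c * (r₁ / max r₁ R) * r = c * r₁ * (r / max r₁ R) := by ring
      _ ≤ c * r₁ * 1 := by
          gcongr; exact div_le_one_of_le₀ (hrR.trans (le_max_right _ _)) hm.le
      _ ≤ f r := by simpa using (h r₁ hr₁ le_rfl).trans (hf hr₁r.le)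

theorem exists_pos_le_mul_of_le_mul {f : ℝ → ℝ} {B C r₁ : ℝ} (hB : ∀ r, f r ≤ B)
    (hr₁ : 0 < r₁) (h : ∀ r, 0 < r → r ≤ r₁ → f r ≤ C * r) :
    ∃ C' > 0, ∀ r, 0 < r → f r ≤ C' * r := by
  refine ⟨max (max C (|B| / r₁)) 1, lt_max_of_lt_right one_pos, fun r hr => ?_⟩
  rcases le_or_gt r r₁ with hrr₁ | hr₁r
  · calc f r ≤ C * r := h r hr hrr₁
      _ ≤ _ := by gcongr; exact (le_max_left _ _).trans (le_max_left _ _)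
  · calc f r ≤ |B| / r₁ * r₁ := by
          rw [div_mul_cancel₀ _ hr₁.ne']; exact (hB r).trans (le_abs_self B)
      _ ≤ |B| / r₁ * r := by gcongr
      _ ≤ _ := by gcongr; exact (le_max_right _ _).trans (le_max_left _ _)

theorem exists_nat_mul_mem_Icc {s D : ℝ} (hs : 0 < s) (hsD : s ≤ D) :
    ∃ N : ℕ, (N : ℝ) * s ∈ Icc D (2 * D) := by
  refine ⟨⌈D / s⌉₊, (div_le_iff₀ hs).1 (Nat.le_ceil _), ?_⟩
  calc (⌈D / s⌉₊ : ℝ) * s ≤ (D / s + 1) * s := by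
        gcongr; exact (Nat.ceil_lt_add_one (div_nonneg (hs.le.trans hsD) hs.le)).le
    _ = D + s := by field_simp
    _ ≤ 2 * D := by linarith

theorem exists_nat_lt_sub_mul_mem_Ioc {y s : ℝ} (hs : 0 < s) {N : ℕ} (hy : y ∈ Ioc 0 (N * s)) :
    ∃ k < N, y - k * s ∈ Ioc 0 s := by
  have hpos : 0 < ⌈y / s⌉₊ := Nat.ceil_pos.2 (div_pos hy.1 hs)
  have hN : ⌈y / s⌉₊ ≤ N := Nat.ceil_le.2 ((div_le_iff₀ hs).2 hy.2)
  refine ⟨⌈y / s⌉₊ - 1, by omega, ?_⟩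
  have hlt : ((⌈y / s⌉₊ - 1 : ℕ) : ℝ) * s < y := (lt_div_iff₀ hs).1 (Nat.lt_ceil.1 (by omega))
  have hle : y ≤ (((⌈y / s⌉₊ - 1 : ℕ) : ℝ) + 1) * s := by
    rw [Nat.cast_sub hpos, Nat.cast_one, sub_add_cancel, ← div_le_iff₀ hs]; exact Nat.le_ceil _
  constructor <;> linarith

theorem IsCompact.exists_measureReal_le_mul {X : Type*} [PseudoMetricSpace X]
    [MeasurableSpace X] {μ : Measure X} {K : Set X} (hK : IsCompact K) {S : ℝ → Set X}
    (hS : ∀ r, S r ⊆ thickening r K)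
    (hloc : ∀ z ∈ K, ∃ ρ > 0, ∃ C : ℝ, ∀ r, 0 < r → μ.real (S r ∩ ball z ρ) ≤ C * r) :
    ∃ C : ℝ, ∃ r₁ > 0, ∀ r, 0 < r → r ≤ r₁ → μ.real (S r) ≤ C * r := by
  choose! ρ hρ C hC using hloc
  obtain ⟨t, htK, hKt⟩ := hK.elim_nhds_subcover (fun z => ball z (ρ z))
    fun z hz => ball_mem_nhds z (hρ z hz)
  obtain ⟨ε, hε, hεt⟩ :=
    hK.exists_thickening_subset_open (isOpen_biUnion fun z _ => isOpen_ball) hKt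
  rw [Finset.set_biUnion_coe] at hεt
  refine ⟨∑ z ∈ t, C z, ε, hε, fun r hr hrε => ?_⟩
  have hSt : S r = ⋃ z ∈ t, S r ∩ ball z (ρ z) := by
    rw [← inter_iUnion₂, inter_eq_left.2 ((hS r).trans ((thickening_mono hrε K).trans hεt))]
  calc μ.real (S r) = μ.real (⋃ z ∈ t, S r ∩ ball z (ρ z)) := congrArg μ.real hSt
    _ ≤ ∑ z ∈ t, μ.real (S r ∩ ball z (ρ z)) := measureReal_biUnion_finset_le _ _
    _ ≤ ∑ z ∈ t, C z * r := Finset.sum_le_sum fun z hz => hC z (htK z hz) r hr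
    _ = (∑ z ∈ t, C z) * r := (Finset.sum_mul ..).symm

section Translates

variable {E : Type*} [NormedAddCommGroup E] [NormedSpace ℝ E] [MeasurableSpace E]
  [BorelSpace E] {μ : Measure E} [μ.IsAddLeftInvariant] {ν : E} {h : E → ℝ}

theorem natCast_mul_measure_le_measure_cthickening (hν : ‖ν‖ = 1)
    (hh : ∀ x t, h (x + t • ν) = h x + t) {W : Set E} (hW : MeasurableSet W) {s : ℝ}
    (hWs : W ⊆ h ⁻¹' Ioc 0 s) (N : ℕ) :
    N * μ W ≤ μ (cthickening (N * s) W) := by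
  set A : ℕ → Set E := fun k => (fun x => ((k : ℝ) * s) • ν + x) ⁻¹' W
  have mem_A {k : ℕ} {x : E} (hx : x ∈ A k) :
      x + ((k : ℝ) * s) • ν ∈ W ∧ 0 < h x + k * s ∧ h x + k * s ≤ s := by
    have hx' : x + ((k : ℝ) * s) • ν ∈ W := by simpa only [A, mem_preimage, add_comm] using hx
    have := hWs hx'
    rw [mem_preimage, hh] at this
    exact ⟨hx', this⟩
  have hdisj : Pairwise (Function.onFun Disjoint A) := (pairwise_disjoint_on A).2 fun j k hjk =>
    disjoint_left.2 fun x hxj hxk => by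
      have hjk' : (j : ℝ) + 1 ≤ k := by exact_mod_cast hjk
      obtain ⟨-, hj, hjs⟩ := mem_A hxj
      obtain ⟨-, -, hk⟩ := mem_A hxk
      nlinarith
  have hA_sub : ∀ k ∈ Finset.range N, A k ⊆ cthickening (N * s) W := fun k hk x hx => by
    obtain ⟨hxW, h0, hs⟩ := mem_A hx
    have hkN : (k : ℝ) ≤ N := by exact_mod_cast (Finset.mem_range.1 hk).le
    refine mem_cthickening_of_dist_le x _ _ W hxW ?_
    rw [dist_self_add_right, norm_smul, hν, mul_one, Real.norm_of_nonneg (by nlinarith)]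
    nlinarith
  calc (N : ℝ≥0∞) * μ W = ∑ k ∈ Finset.range N, μ (A k) := by simp [A, measure_preimage_add]
    _ = μ (⋃ k ∈ Finset.range N, A k) := (measure_biUnion_finset (hdisj.set_pairwise _)
          fun k _ => hW.preimage (measurable_const_add _)).symm
    _ ≤ μ (cthickening (N * s) W) := measure_mono (iUnion₂_subset hA_sub)

theorem measure_le_natCast_mul_measure_cthickening_inter (hν : ‖ν‖ = 1)
    (hh : ∀ x t, h (x + t • ν) = h x + t) {P : Set E} {s : ℝ} (hs : 0 < s) {N : ℕ}
    (hP : P ⊆ h ⁻¹' Ioc 0 (N * s)) :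
    μ P ≤ N * μ (cthickening (N * s) P ∩ h ⁻¹' Ioc 0 s) := by
  set G := cthickening (N * s) P ∩ h ⁻¹' Ioc 0 s
  have hcover : P ⊆ ⋃ k ∈ Finset.range N, (fun x => (-((k : ℝ) * s)) • ν + x) ⁻¹' G := by
    intro x hx
    obtain ⟨k, hkN, hk⟩ := exists_nat_lt_sub_mul_mem_Ioc hs (hP hx)
    have hkN' : (k : ℝ) ≤ N := by exact_mod_cast hkN.le
    refine mem_biUnion (Finset.mem_range.2 hkN) ⟨mem_cthickening_of_dist_le _ x _ P hx ?_, ?_⟩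
    · rw [dist_add_self_left, norm_smul, hν, mul_one, norm_neg, Real.norm_of_nonneg (by positivity)]
      gcongr
    · show h (_ + _) ∈ Ioc 0 s
      rwa [add_comm, hh, ← sub_eq_add_neg]
  calc μ P ≤ ∑ k ∈ Finset.range N, μ ((fun x => (-((k : ℝ) * s)) • ν + x) ⁻¹' G) :=
        (measure_mono hcover).trans (measure_biUnion_finset_le _ _)
    _ = N * μ G := by simp [measure_preimage_add]

theorem measureReal_le_measureReal_cthickening_div_mul (hν : ‖ν‖ = 1)
    (hh : ∀ x t, h (x + t • ν) = h x + t) {W : Set E} (hW : MeasurableSet W) {s D : ℝ}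
    (hs : 0 < s) (hsD : s ≤ D) (hWs : W ⊆ h ⁻¹' Ioc 0 s)
    (hfin : μ (cthickening (2 * D) W) ≠ ∞) :
    μ.real W ≤ μ.real (cthickening (2 * D) W) / D * s := by
  obtain ⟨N, hDN, hN2D⟩ := exists_nat_mul_mem_Icc hs hsD
  have hN : N * μ.real W ≤ μ.real (cthickening (2 * D) W) := by
    have := (natCast_mul_measure_le_measure_cthickening (μ := μ) hν hh hW hWs N).trans
      (measure_mono (cthickening_mono hN2D W))
    simpa [measureReal_def, ENNReal.toReal_mul] using ENNReal.toReal_mono hfin this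
  rw [div_mul_eq_mul_div, le_div_iff₀ (hs.trans_le hsD)]
  calc μ.real W * D ≤ μ.real W * (N * s) := by gcongr
    _ = N * μ.real W * s := by ring
    _ ≤ _ := by gcongr

theorem measureReal_div_mul_le_measureReal_cthickening_inter (hν : ‖ν‖ = 1)
    (hh : ∀ x t, h (x + t • ν) = h x + t) {P : Set E} {s D : ℝ} (hs : 0 < s) (hsD : s ≤ D)
    (hP : P ⊆ h ⁻¹' Ioc 0 D) (hfin : μ (cthickening (2 * D) P ∩ h ⁻¹' Ioc 0 s) ≠ ∞) :
    μ.real P / (2 * D) * s ≤ μ.real (cthickening (2 * D) P ∩ h ⁻¹' Ioc 0 s) := by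
  set G := cthickening (2 * D) P ∩ h ⁻¹' Ioc 0 s
  obtain ⟨N, hDN, hN2D⟩ := exists_nat_mul_mem_Icc hs hsD
  have hN : μ.real P ≤ N * μ.real G := by
    have := (measure_le_natCast_mul_measure_cthickening_inter (μ := μ) hν hh hs
      (hP.trans (preimage_mono (Ioc_subset_Ioc_right hDN)))).trans
      (mul_le_mul_right (measure_mono (inter_subset_inter_left _ (cthickening_mono hN2D P))) _)
    simpa [measureReal_def, ENNReal.toReal_mul] using
      ENNReal.toReal_mono (ENNReal.mul_ne_top (ENNReal.natCast_ne_top N) hfin) this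
  rw [div_mul_eq_mul_div, div_le_iff₀ (by linarith)]
  calc μ.real P * s ≤ N * μ.real G * s := by gcongr
    _ = μ.real G * (N * s) := by ring
    _ ≤ μ.real G * (2 * D) := by gcongr

end Translates

theorem frontier_setOf_pos_eq {E : Type*} [NormedAddCommGroup E] [NormedSpace ℝ E]
    {h : E → ℝ} {ν : E} (hc : Continuous h) (hh : ∀ x t, h (x + t • ν) = h x + t) :
    frontier {x | 0 < h x} = {x | h x = 0} := by
  ext x
  rw [(isOpen_lt continuous_const hc).frontier_eq, mem_sdiff, mem_ofPred_eq, mem_ofPred_eq]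
  refine ⟨fun ⟨hcl, hpos⟩ =>
    (not_lt.1 hpos).antisymm (closure_lt_subset_le continuous_const hc hcl),
    fun hx => ⟨?_, hx.not_gt⟩⟩
  have hlim : Filter.Tendsto (fun t : ℝ => x + t • ν) (nhdsWithin 0 (Ioi 0)) (nhds x) :=
    ((continuous_const.add (continuous_id.smul continuous_const)).tendsto' 0 x (by simp)).mono_left
      nhdsWithin_le_nhds
  exact mem_closure_of_tendsto hlim (eventually_mem_nhdsWithin.mono fun t (ht : 0 < t) => by
    simpa [hh, hx] using ht)

section GraphChart

variable {E : Type*} [NormedAddCommGroup E] [InnerProductSpace ℝ E]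

def graphHeight (ν : E) (ψ : E → ℝ) (x : E) : ℝ := inner ℝ ν x - ψ x

variable {ν : E} {ψ : E → ℝ} {M : ℝ≥0}

theorem graphHeight_add_smul (hν : ‖ν‖ = 1) (hψ : ∀ (x : E) (t : ℝ), ψ (x + t • ν) = ψ x)
    (x : E) (t : ℝ) :
    graphHeight ν ψ (x + t • ν) = graphHeight ν ψ x + t := by
  simp only [graphHeight, hψ, inner_add_right, real_inner_smul_right, real_inner_self_eq_norm_sq,
    hν]
  ring

theorem LipschitzWith.graphHeight (hν : ‖ν‖ = 1) (hψ : LipschitzWith M ψ) :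
    LipschitzWith (1 + M) (graphHeight ν ψ) := by
  have := LipschitzWith.vsub (f := fun x => inner ℝ ν x) (g := ψ) (innerSL ℝ ν).lipschitz hψ
  have h1 : ‖innerSL ℝ ν‖₊ = 1 := by ext; simp [hν]
  rwa [h1] at this

/-- `ψ` is constant along `ν`, so it is a function of the component orthogonal to `ν`, and
`Ω ∩ U` is the part of `U` strictly above its graph. -/
structure IsGraphChart (Ω U : Set E) (ν : E) (ψ : E → ℝ) (M : ℝ≥0) : Prop where
  isOpen : IsOpen U
  norm_eq_one : ‖ν‖ = 1
  lipschitzWith : LipschitzWith M ψ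
  apply_add_smul : ∀ (x : E) (t : ℝ), ψ (x + t • ν) = ψ x
  inter_eq : Ω ∩ U = {x | ψ x < inner ℝ ν x} ∩ U

namespace IsGraphChart

variable {Ω U : Set E} {x w : E}

theorem graphHeight_add_smul (hc : IsGraphChart Ω U ν ψ M) (x : E) (t : ℝ) :
    graphHeight ν ψ (x + t • ν) = graphHeight ν ψ x + t :=
  _root_.graphHeight_add_smul hc.norm_eq_one hc.apply_add_smul x t

theorem continuous_graphHeight (hc : IsGraphChart Ω U ν ψ M) : Continuous (graphHeight ν ψ) :=
  (hc.lipschitzWith.graphHeight hc.norm_eq_one).continuous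

theorem inter_eq_graphHeight (hc : IsGraphChart Ω U ν ψ M) :
    Ω ∩ U = {x | 0 < graphHeight ν ψ x} ∩ U := by
  simp only [hc.inter_eq, graphHeight, sub_pos]

theorem mem_iff (hc : IsGraphChart Ω U ν ψ M) (hx : x ∈ U) : x ∈ Ω ↔ 0 < graphHeight ν ψ x := by
  simpa [hx] using Set.ext_iff.1 hc.inter_eq_graphHeight x

theorem mem_frontier_iff (hc : IsGraphChart Ω U ν ψ M) (hx : x ∈ U) :
    x ∈ frontier Ω ↔ graphHeight ν ψ x = 0 := by
  have : frontier Ω ∩ U = {x | graphHeight ν ψ x = 0} ∩ U := by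
    rw [← frontier_inter_open_inter hc.isOpen, hc.inter_eq_graphHeight,
      frontier_inter_open_inter hc.isOpen,
      frontier_setOf_pos_eq hc.continuous_graphHeight hc.graphHeight_add_smul]
  simpa [hx] using Set.ext_iff.1 this x

theorem infDist_frontier_le (hc : IsGraphChart Ω U ν ψ M)
    (hw : x - graphHeight ν ψ x • ν ∈ U) : infDist x (frontier Ω) ≤ |graphHeight ν ψ x| := by
  have hwF : x - graphHeight ν ψ x • ν ∈ frontier Ω := by
    rw [hc.mem_frontier_iff hw, sub_eq_add_neg, ← neg_smul, hc.graphHeight_add_smul, add_neg_cancel]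
  calc infDist x (frontier Ω) ≤ dist x (x - graphHeight ν ψ x • ν) := infDist_le_dist_of_mem hwF
    _ = |graphHeight ν ψ x| := by
      rw [dist_self_sub_right, norm_smul, hc.norm_eq_one, mul_one, Real.norm_eq_abs]

theorem graphHeight_le_mul_dist (hc : IsGraphChart Ω U ν ψ M) (hw : w ∈ U)
    (hwF : w ∈ frontier Ω) (x : E) : graphHeight ν ψ x ≤ (1 + M) * dist x w := by
  have := (hc.lipschitzWith.graphHeight hc.norm_eq_one).dist_le_mul x w
  rw [Real.dist_eq, (hc.mem_frontier_iff hw).1 hwF, sub_zero] at this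
  simpa using (le_abs_self _).trans this

end IsGraphChart

end GraphChart

section BoundaryLayer

def boundaryLayer {X : Type*} [PseudoMetricSpace X] (Ω : Set X) (r : ℝ) : Set X :=
  {x ∈ Ω | infDist x (frontier Ω) < r}

variable {X : Type*} [PseudoMetricSpace X] {Ω : Set X} {r : ℝ}

theorem boundaryLayer_subset : boundaryLayer Ω r ⊆ Ω := fun _ hx => hx.1

theorem monotone_boundaryLayer : Monotone (boundaryLayer Ω) :=
  fun _ _ h _ hx => ⟨hx.1, hx.2.trans_le h⟩

theorem IsOpen.boundaryLayer (hΩ : IsOpen Ω) : IsOpen (boundaryLayer Ω r) :=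
  hΩ.inter (isOpen_lt (continuous_infDist_pt _) continuous_const)

theorem boundaryLayer_subset_thickening (hF : (frontier Ω).Nonempty) :
    boundaryLayer Ω r ⊆ thickening r (frontier Ω) :=
  fun _ hx => (mem_thickening_iff_infDist_lt hF).2 hx.2

theorem monotone_measureReal_boundaryLayer [MeasurableSpace X] {μ : Measure X} (hΩ : μ Ω ≠ ∞) :
    Monotone fun r => μ.real (boundaryLayer Ω r) :=
  fun _ _ h => measureReal_mono (monotone_boundaryLayer h)
    (ne_top_of_le_ne_top hΩ (measure_mono boundaryLayer_subset))

end BoundaryLayer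

namespace IsGraphChart

variable {E : Type*} [NormedAddCommGroup E] [InnerProductSpace ℝ E] [FiniteDimensional ℝ E]
  [MeasurableSpace E] [BorelSpace E] {μ : Measure E} [μ.IsAddHaarMeasure]
  {Ω U : Set E} {ν : E} {ψ : E → ℝ} {M : ℝ≥0} {z : E}

theorem exists_pos_mul_le_measureReal_boundaryLayer (hc : IsGraphChart Ω U ν ψ M)
    (hΩ : Bornology.IsBounded Ω) (hz : z ∈ frontier Ω) (hzU : z ∈ U) :
    ∃ c > 0, ∃ r₁ > 0, ∀ r, 0 < r → r ≤ r₁ → c * r ≤ μ.real (boundaryLayer Ω r) := by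
  obtain ⟨ε, hε, hεU⟩ := Metric.isOpen_iff.1 hc.isOpen z hzU
  obtain ⟨δ, hδ, rfl⟩ : ∃ δ > 0, ε = 5 * δ := ⟨ε / 5, by positivity, by ring⟩
  set P := ball z δ ∩ graphHeight ν ψ ⁻¹' Ioo 0 δ
  have hP : 0 < μ.real P := by
    have hPo : IsOpen P := isOpen_ball.inter (isOpen_Ioo.preimage hc.continuous_graphHeight)
    have hPz : z + (δ / 2) • ν ∈ P := by
      refine ⟨?_, ?_⟩
      · rw [mem_ball, dist_self_add_left, norm_smul, hc.norm_eq_one, mul_one,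
          Real.norm_of_nonneg (by positivity)]
        linarith
      · rw [mem_preimage, hc.graphHeight_add_smul, (hc.mem_frontier_iff hzU).1 hz, zero_add]
        constructor <;> linarith
    exact ENNReal.toReal_pos (hPo.measure_pos μ ⟨_, hPz⟩).ne'
      (measure_ne_top_of_subset inter_subset_left measure_ball_lt_top.ne)
  refine ⟨μ.real P / (2 * δ) / 2, by positivity, 2 * δ, by positivity, fun r hr hr₁ => ?_⟩
  set G := cthickening (2 * δ) P ∩ graphHeight ν ψ ⁻¹' Ioc 0 (r / 2)
  have hG : G ⊆ boundaryLayer Ω r := by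
    rintro x ⟨hxP, hx0, hxs⟩
    have hxz : dist x z ≤ 3 * δ := by
      have := cthickening_subset_of_subset (2 * δ) inter_subset_left hxP
      rw [cthickening_ball (by positivity) hδ, mem_closedBall] at this
      linarith
    have hxU : x ∈ U := hεU (by rw [mem_ball]; linarith)
    have hwU : x - graphHeight ν ψ x • ν ∈ U := hεU <| by
      rw [mem_ball]
      calc dist (x - graphHeight ν ψ x • ν) z
          ≤ dist (x - graphHeight ν ψ x • ν) x + dist x z := dist_triangle _ _ _
        _ = graphHeight ν ψ x + dist x z := by
          rw [dist_comm, dist_self_sub_right, norm_smul, hc.norm_eq_one, mul_one,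
            Real.norm_of_nonneg hx0.le]
        _ < 5 * δ := by linarith [hxs]
    refine ⟨(hc.mem_iff hxU).2 hx0, (hc.infDist_frontier_le hwU).trans_lt ?_⟩
    rw [abs_of_pos hx0]
    linarith [hxs]
  calc μ.real P / (2 * δ) / 2 * r = μ.real P / (2 * δ) * (r / 2) := by ring
    _ ≤ μ.real G := measureReal_div_mul_le_measureReal_cthickening_inter hc.norm_eq_one
        hc.graphHeight_add_smul (half_pos hr) (by linarith) (fun x hx => Ioo_subset_Ioc_self hx.2)
        (measure_ne_top_of_subset (hG.trans boundaryLayer_subset) hΩ.measure_lt_top.ne)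
    _ ≤ μ.real (boundaryLayer Ω r) :=
        measureReal_mono hG (measure_ne_top_of_subset boundaryLayer_subset hΩ.measure_lt_top.ne)

theorem exists_measureReal_boundaryLayer_inter_ball_le (hc : IsGraphChart Ω U ν ψ M)
    (hΩo : IsOpen Ω) (hΩb : Bornology.IsBounded Ω) (hz : z ∈ frontier Ω) (hzU : z ∈ U) :
    ∃ ρ > 0, ∃ C : ℝ, ∀ r, 0 < r → μ.real (boundaryLayer Ω r ∩ ball z ρ) ≤ C * r := by
  obtain ⟨ε, hε, hεU⟩ := Metric.isOpen_iff.1 hc.isOpen z hzU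
  obtain ⟨ρ, hρ, rfl⟩ : ∃ ρ > 0, ε = 2 * ρ := ⟨ε / 2, by positivity, by ring⟩
  have hK : μ (cthickening (2 * ((1 + M) * ρ)) Ω) ≠ ∞ := hΩb.cthickening.measure_lt_top.ne
  have hslab : ∀ r, 0 < r → r ≤ ρ →
      boundaryLayer Ω r ∩ ball z ρ ⊆ graphHeight ν ψ ⁻¹' Ioc 0 ((1 + M) * r) := by
    rintro r hr hrρ x ⟨⟨hxΩ, hxr⟩, hxz⟩
    obtain ⟨w, hwF, hxw⟩ := (infDist_lt_iff ⟨z, hz⟩).1 hxr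
    have hwU : w ∈ U := hεU <| by
      rw [mem_ball]
      calc dist w z ≤ dist w x + dist x z := dist_triangle _ _ _
        _ < 2 * ρ := by rw [dist_comm]; linarith [mem_ball.1 hxz]
    refine ⟨(hc.mem_iff (hεU (ball_subset_ball (by linarith) hxz))).1 hxΩ,
      (hc.graphHeight_le_mul_dist hwU hwF x).trans ?_⟩
    gcongr
  have hnear : ∀ r, 0 < r → r ≤ ρ → μ.real (boundaryLayer Ω r ∩ ball z ρ) ≤
      μ.real (cthickening (2 * ((1 + M) * ρ)) Ω) / ((1 + M) * ρ) * (1 + M) * r := by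
    intro r hr hrρ
    have hsub : cthickening (2 * ((1 + M) * ρ)) (boundaryLayer Ω r ∩ ball z ρ) ⊆
        cthickening (2 * ((1 + M) * ρ)) Ω :=
      cthickening_subset_of_subset _ (inter_subset_left.trans boundaryLayer_subset)
    calc μ.real (boundaryLayer Ω r ∩ ball z ρ)
        ≤ μ.real (cthickening (2 * ((1 + M) * ρ)) (boundaryLayer Ω r ∩ ball z ρ)) /
            ((1 + M) * ρ) * ((1 + M) * r) :=
          measureReal_le_measureReal_cthickening_div_mul hc.norm_eq_one hc.graphHeight_add_smul
            (hΩo.boundaryLayer.inter isOpen_ball).measurableSet (by positivity) (by gcongr)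
            (hslab r hr hrρ) (measure_ne_top_of_subset hsub hK)
      _ ≤ μ.real (cthickening (2 * ((1 + M) * ρ)) Ω) / ((1 + M) * ρ) * ((1 + M) * r) := by
          gcongr
      _ = _ := by ring
  obtain ⟨C, -, hC⟩ := exists_pos_le_mul_of_le_mul
    (fun r => measureReal_mono (inter_subset_left.trans boundaryLayer_subset)
      hΩb.measure_lt_top.ne) hρ hnear
  exact ⟨ρ, hρ, C, hC⟩

end IsGraphChart

namespace IsLipschitzDomain

variable {d : ℕ} {Ω : Set (EuclideanSpace ℝ (Fin d))}

theorem exists_isGraphChart (hΩ : IsLipschitzDomain Ω) {z : EuclideanSpace ℝ (Fin d)}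
    (hz : z ∈ frontier Ω) : ∃ U ν ψ M, z ∈ U ∧ IsGraphChart Ω U ν ψ M := by
  obtain ⟨U, ν, ψ, M, hzU, hU, hν, hψ, hinv, hgraph⟩ := hΩ.2.2 z hz
  exact ⟨U, ν, ψ, M, hzU, hU, hν, hψ, hinv, hgraph⟩

theorem exists_pos_mul_le_measureReal_boundaryLayer (hΩ : IsLipschitzDomain Ω)
    (hF : (frontier Ω).Nonempty) (R : ℝ) :
    ∃ c > 0, ∀ r, 0 < r → r ≤ R → c * r ≤ volume.real (boundaryLayer Ω r) := by
  obtain ⟨z, hz⟩ := hF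
  obtain ⟨U, ν, ψ, M, hzU, hc⟩ := hΩ.exists_isGraphChart hz
  obtain ⟨c, hc0, r₁, hr₁, hlow⟩ :=
    hc.exists_pos_mul_le_measureReal_boundaryLayer (μ := volume) hΩ.2.1 hz hzU
  exact (monotone_measureReal_boundaryLayer hΩ.2.1.measure_lt_top.ne).exists_pos_mul_le_of_le_mul
    hc0 hr₁ hlow R

theorem exists_measureReal_boundaryLayer_le_mul (hΩ : IsLipschitzDomain Ω)
    (hF : (frontier Ω).Nonempty) :
    ∃ C > 0, ∀ r, 0 < r → volume.real (boundaryLayer Ω r) ≤ C * r := by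
  have hFc : IsCompact (frontier Ω) := isCompact_of_isClosed_isBounded isClosed_frontier
    (hΩ.2.1.closure.subset frontier_subset_closure)
  obtain ⟨C, r₁, hr₁, hC⟩ := hFc.exists_measureReal_le_mul
    (fun r => boundaryLayer_subset_thickening hF) fun z hz => by
      obtain ⟨U, ν, ψ, M, hzU, hc⟩ := hΩ.exists_isGraphChart hz
      exact hc.exists_measureReal_boundaryLayer_inter_ball_le (μ := volume) hΩ.1 hΩ.2.1 hz hzU
  exact exists_pos_le_mul_of_le_mul
    (fun r => measureReal_mono boundaryLayer_subset hΩ.2.1.measure_lt_top.ne) hr₁ hC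

end IsLipschitzDomain

theorem nonempty_frontier_of_diam_pos {E : Type*} [NormedAddCommGroup E] [NormedSpace ℝ E]
    {s : Set E} (hs : 0 < diam s) : (frontier s).Nonempty := by
  have hb : Bornology.IsBounded s := by_contra fun h => hs.ne' (diam_eq_zero_of_unbounded h)
  obtain ⟨x, hx, y, -, hxy⟩ := Set.not_subsingleton_iff.1 fun h => hs.ne' (diam_subsingleton h)
  have : Nontrivial E := ⟨x, y, hxy⟩
  exact nonempty_frontier_iff.2 ⟨⟨x, hx⟩, fun h => NormedSpace.unbounded_univ ℝ E (h ▸ hb)⟩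

theorem boundary_layer_measure_comparable_general
    (d : ℕ)
    (Ω : Set (EuclideanSpace ℝ (Fin d)))
    (hΩ : IsLipschitzDomain Ω) :
    ∃ c > 0, ∃ C > 0, ∀ r : ℝ, 0 < r → r ≤ diam Ω →
      c * r ≤ (volume {x ∈ Ω | infDist x (frontier Ω) < r}).toReal ∧
      (volume {x ∈ Ω | infDist x (frontier Ω) < r}).toReal ≤ C * r := by
  rcases (diam_nonneg (s := Ω)).eq_or_lt with hdiam | hdiam
  · exact ⟨1, one_pos, 1, one_pos, fun r hr hrΩ => absurd (hr.trans_le hrΩ) hdiam.ge.not_gt⟩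
  have hF := nonempty_frontier_of_diam_pos hdiam
  obtain ⟨c, hc, hlow⟩ := hΩ.exists_pos_mul_le_measureReal_boundaryLayer hF (diam Ω)
  obtain ⟨C, hC, hup⟩ := hΩ.exists_measureReal_boundaryLayer_le_mul hF
  exact ⟨c, hc, C, hC, fun r hr hrΩ => ⟨hlow r hr hrΩ, hup r hr⟩⟩

/-- For a bounded Lipschitz domain `Ω`, the boundary layer
`Ω_r = {x ∈ Ω : dist(x, ∂Ω) < r}` has measure comparable to `r`:
`c r ≤ |Ω_r| ≤ C r` for `0 < r ≤ diam Ω`. -/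
theorem boundary_layer_measure_comparable
    (d : ℕ) (hd : 1 ≤ d)
    (Ω : Set (EuclideanSpace ℝ (Fin d)))
    (hΩ : IsLipschitzDomain Ω) (hne : Ω.Nonempty) :
    ∃ c > 0, ∃ C > 0, ∀ r : ℝ, 0 < r → r ≤ diam Ω →
      c * r ≤ (volume {x ∈ Ω | infDist x (frontier Ω) < r}).toReal ∧
      (volume {x ∈ Ω | infDist x (frontier Ω) < r}).toReal ≤ C * r :=
  boundary_layer_measure_comparable_general d Ω hΩ
end
end
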